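/- arXiv:1605.09004 — 2 statements merged into one kernel-verified Lean document; each statement's English description precedes it below -/
import Mathlib

section
/- Let K ≥ 2 and define d_k = (1/4)·(k/K) for 2 ≤ k ≤ K and d₁ = 0, and for each i ∈ {1,...,K} define gaps Δ_k^i = d_i + d_k for k ≠ i and Δ_i^i = d_i (with the convention appropriate for i ≥ 2), and H(i) = ∑_{k≠i} (Δ_k^i)^{-2}. Then for every i with 2 ≤ i ≤ K, d_i² · H(i) ≤ 2i. -/
/-!
Since `d₁ = 0`, the term `k = 1` of `d_i² H(i)` is exactly `1`, and every other term is
`d_i² / (d_i + d_k)² = i² / (i + k)²`, the scale `1/(4K)` cancelling. Telescoping against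
`1/(i + k - 1) - 1/(i + k)` bounds `∑_{k ≥ 2} i² / (i + k)²` by `i² / (i + 1) ≤ i`,
so `d_i² H(i) ≤ 1 + i ≤ 2 i`.
-/

open Finset

lemma sum_Ioc_inv_add_sq_le {x : ℝ} {m n : ℕ} (hx : 0 < x + m) (hmn : m ≤ n) :
    ∑ k ∈ Ioc m n, ((x + k) ^ 2)⁻¹ ≤ (x + m)⁻¹ - (x + n)⁻¹ := by
  induction n, hmn using Nat.le_induction with
  | base => simp
  | succ n hmn ih =>
    have hn : 0 < x + n := by
      have : (m : ℝ) ≤ n := by exact_mod_cast hmn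
      linarith
    have hterm : ((x + (n + 1 : ℕ)) ^ 2)⁻¹ ≤ (x + n)⁻¹ - (x + (n + 1 : ℕ))⁻¹ := by
      push_cast
      rw [inv_sub_inv hn.ne' (by linarith), ← add_assoc, add_sub_cancel_left, one_div]
      exact inv_anti₀ (by positivity) (by nlinarith)
    rw [sum_Ioc_succ_top (by omega)]
    linarith

lemma sq_mul_sum_Ioc_one_inv_add_sq_le {x : ℝ} (hx : 0 ≤ x) (n : ℕ) :
    x ^ 2 * ∑ k ∈ Ioc 1 n, ((x + k) ^ 2)⁻¹ ≤ x := by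
  have hsum : ∑ k ∈ Ioc 1 n, ((x + k) ^ 2)⁻¹ ≤ (x + 1)⁻¹ := by
    rcases le_total n 1 with hn | hn
    · simp [Ioc_eq_empty_of_le hn, add_nonneg hx zero_le_one]
    · have := sum_Ioc_inv_add_sq_le (x := x) (by simp; linarith) hn
      have : 0 ≤ (x + n)⁻¹ := by positivity
      push_cast at *
      linarith
  calc x ^ 2 * ∑ k ∈ Ioc 1 n, ((x + k) ^ 2)⁻¹ ≤ x ^ 2 * (x + 1)⁻¹ := by gcongr
    _ ≤ x := by
      rw [← div_eq_mul_inv, div_le_iff₀ (by linarith)]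
      nlinarith

theorem gapsq_mul_complexity_le_general (K : ℕ) (d H : ℕ → ℝ)
    (hd : ∀ k, d k = if k = 1 then 0 else (1/4) * ((k : ℝ)/(K : ℝ)))
    (hH : ∀ i ∈ Icc 1 K, H i = ∑ k ∈ (Icc 1 K).erase i, ((d i + d k)^2)⁻¹) :
    ∀ i ∈ Icc 2 K, (d i)^2 * H i ≤ 2 * i := by
  intro i hi
  obtain ⟨hi2, hiK⟩ := mem_Icc.1 hi
  have hK : (0 : ℝ) < K := by exact_mod_cast (show 0 < K by omega)
  have hi1 : (1 : ℝ) ≤ i := by exact_mod_cast (show 1 ≤ i by omega)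
  have hd_of_ne {k : ℕ} (hk : k ≠ 1) : d k = k / (4 * K) := by rw [hd, if_neg hk]; ring
  have hdi : d i = i / (4 * K) := hd_of_ne (by omega)
  have h1 : 1 ∈ (Icc 1 K).erase i := by simp; omega
  have hsub : ((Icc 1 K).erase i).erase 1 ⊆ Ioc 1 K := by
    intro k; simp only [mem_erase, mem_Icc, mem_Ioc]; omega
  calc d i ^ 2 * H i
      = d i ^ 2 * ((d i + d 1) ^ 2)⁻¹
        + ∑ k ∈ ((Icc 1 K).erase i).erase 1, d i ^ 2 * ((d i + d k) ^ 2)⁻¹ := by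
        rw [hH i (Icc_subset_Icc_left one_le_two hi), ← add_sum_erase _ _ h1, mul_add, mul_sum]
    _ = 1 + ∑ k ∈ ((Icc 1 K).erase i).erase 1, (i : ℝ) ^ 2 * (((i : ℝ) + k) ^ 2)⁻¹ := by
        congr 1
        · rw [hd 1, if_pos rfl, add_zero, mul_inv_cancel₀ (by rw [hdi]; positivity)]
        · refine sum_congr rfl fun k hk => ?_
          rw [hdi, hd_of_ne (ne_of_mem_erase hk)]
          field_simp
    _ ≤ 1 + (i : ℝ) ^ 2 * ∑ k ∈ Ioc 1 K, (((i : ℝ) + k) ^ 2)⁻¹ := by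
        rw [mul_sum]
        gcongr
    _ ≤ 1 + i := by grw [sq_mul_sum_Ioc_one_inv_add_sq_le (x := (i : ℝ)) (by positivity)]
    _ ≤ 2 * i := by linarith

open Finset in
/-- In the flipped-Bernoulli construction with gaps `d_k = k/(4K)` for `2 ≤ k ≤ K`, `d₁ = 0`,
`Δ_k^i = d_i + d_k` for `k ≠ i`, and `H(i) = ∑_{k ≠ i} (Δ_k^i)⁻²`, one has
`d_i² H(i) ≤ 2 i` for every `2 ≤ i ≤ K`. -/
theorem gapsq_mul_complexity_le (K : ℕ) (hK : 2 ≤ K) (d H : ℕ → ℝ)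
    (hd : ∀ k, d k = if k = 1 then 0 else (1/4) * ((k : ℝ)/(K : ℝ)))
    (hH : ∀ i ∈ Icc 1 K, H i = ∑ k ∈ (Icc 1 K).erase i, ((d i + d k)^2)⁻¹) :
    ∀ i ∈ Icc 2 K, (d i)^2 * H i ≤ 2 * i :=
  gapsq_mul_complexity_le_general K d H hd hH
end

section
/- Let K ≥ 2, d_i = i/(4K) for 2 ≤ i ≤ K, Δ_k^i = d_i + d_k for k ≠ i (where d₁ = 0), H(i) = ∑_{k≠i}(Δ_k^i)^{-2}, and h* = ∑_{i=2}^K 1/(d_i²·H(i)). Then h* ≥ (3/10)·log K. -/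
open Finset in
/-- Telescoping bound: `∑_{k=2}^{n+1} 1/(x+k)² ≤ 1/(x+1) - 1/(x+n+1)`. -/
lemma aux_tele (x : ℝ) (hx : 1 ≤ x) (n : ℕ) :
    ∑ k ∈ Icc 2 (n + 1), ((x + (k : ℝ)) ^ 2)⁻¹ ≤ (x + 1)⁻¹ - (x + (n : ℝ) + 1)⁻¹ := by
  induction n with
  | zero => simp
  | succ m ih =>
    rw [Finset.sum_Icc_succ_top (by omega)]
    have h1 : (0:ℝ) < x + (m : ℝ) + 1 := by positivity
    have h2 : (0:ℝ) < x + (m : ℝ) + 2 := by positivity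
    have key : ((x + (m:ℝ) + 2) ^ 2)⁻¹ ≤ (x + (m:ℝ) + 1)⁻¹ - (x + (m:ℝ) + 2)⁻¹ := by
      rw [inv_sub_inv (ne_of_gt h1) (ne_of_gt h2),
        show x + (m:ℝ) + 2 - (x + (m:ℝ) + 1) = 1 by ring, one_div]
      apply inv_anti₀ (by positivity)
      nlinarith
    push_cast
    rw [show x + ((m:ℝ) + 1 + 1) = x + (m:ℝ) + 2 by ring,
      show x + ((m:ℝ) + 1) + 1 = x + (m:ℝ) + 2 by ring]
    linarith

open Finset in
/-- Harmonic-type lower bound: `∑_{i=2}^K 1/(i+1) ≥ log(K+2) - log 3`. -/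
lemma aux_harm (K : ℕ) (hK : 2 ≤ K) :
    Real.log ((K : ℝ) + 2) - Real.log 3 ≤ ∑ i ∈ Icc 2 K, ((i : ℝ) + 1)⁻¹ := by
  induction K, hK using Nat.le_induction with
  | base =>
    have h := Real.log_le_sub_one_of_pos (x := (4:ℝ)/3) (by norm_num)
    rw [Real.log_div (by norm_num) (by norm_num)] at h
    norm_num at h ⊢
    linarith
  | succ n hn ih =>
    rw [Finset.sum_Icc_succ_top (by omega)]
    have h := Real.log_le_sub_one_of_pos (x := ((n:ℝ)+3)/((n:ℝ)+2)) (by positivity)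
    rw [Real.log_div (by positivity) (by positivity)] at h
    have h2 : ((n:ℝ)+3)/((n:ℝ)+2) - 1 = ((n:ℝ)+2)⁻¹ := by
      field_simp
      norm_num
    rw [h2] at h
    push_cast
    rw [show ((n:ℝ) + 1 + 2) = (n:ℝ) + 3 by ring, show ((n:ℝ) + 1 + 1) = (n:ℝ) + 2 by ring]
    linarith

/-- Numeric step: `(3/10) log K ≤ log(K+2) - log 3` for `K ≥ 2`. -/
lemma aux_num (K : ℕ) (hK : 2 ≤ K) :
    (3/10) * Real.log K ≤ Real.log ((K : ℝ) + 2) - Real.log 3 := by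
  have l2 : (0:ℝ) ≤ Real.log 2 := Real.log_nonneg (by norm_num)
  have l3 : (0:ℝ) ≤ Real.log 3 := Real.log_nonneg (by norm_num)
  rcases Nat.lt_or_ge K 5 with h5 | h5
  · interval_cases K
    · -- K = 2 : need (3/10) log 2 + log 3 ≤ log 4 = 2 log 2, i.e. 10 log 3 ≤ 17 log 2
      have h : Real.log ((3:ℝ)^10) ≤ Real.log ((2:ℝ)^17) :=
        Real.log_le_log (by positivity) (by norm_num)
      rw [Real.log_pow, Real.log_pow] at h
      have h4 : Real.log ((2:ℝ)+2) = 2 * Real.log 2 := by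
        rw [show ((2:ℝ)+2) = 2^(2:ℕ) by norm_num, Real.log_pow]; norm_num
      push_cast at h ⊢
      rw [h4]
      linarith
    · -- K = 3 : need 13 log 3 ≤ 10 log 5
      have h : Real.log ((3:ℝ)^13) ≤ Real.log ((5:ℝ)^10) :=
        Real.log_le_log (by positivity) (by norm_num)
      rw [Real.log_pow, Real.log_pow] at h
      push_cast at h ⊢
      rw [show ((3:ℝ)+2) = 5 by norm_num]
      linarith
    · -- K = 4 : need (3/10) log 4 ≤ log 6 - log 3 = log 2
      have h6 : Real.log ((4:ℝ)+2) = Real.log 2 + Real.log 3 := by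
        rw [show ((4:ℝ)+2) = 2*3 by norm_num, Real.log_mul (by norm_num) (by norm_num)]
      have h4 : Real.log (4:ℝ) = 2 * Real.log 2 := by
        rw [show (4:ℝ) = 2^(2:ℕ) by norm_num, Real.log_pow]; norm_num
      push_cast
      rw [h6, h4]
      linarith
  · -- K ≥ 5 : log 3 ≤ (7/10) log K since 3^10 ≤ 5^7
    have hK5 : (5:ℝ) ≤ (K:ℝ) := by exact_mod_cast h5
    have h : Real.log ((3:ℝ)^10) ≤ Real.log ((5:ℝ)^7) :=
      Real.log_le_log (by positivity) (by norm_num)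
    rw [Real.log_pow, Real.log_pow] at h
    have h5K : Real.log (5:ℝ) ≤ Real.log K := Real.log_le_log (by norm_num) hK5
    have hKK : Real.log (K:ℝ) ≤ Real.log ((K:ℝ)+2) :=
      Real.log_le_log (by linarith) (by linarith)
    push_cast at h ⊢
    linarith

open Finset in
/-- In the family of flipped Bernoulli problems with gaps `d_i = i/(4K)` (`d₁ = 0`),
`Δ_k^i = d_i + d_k` for `k ≠ i`, `H(i) = ∑_{k ≠ i} (Δ_k^i)⁻²`, and
`h* = ∑_{i=2}^K 1/(d_i² H(i))`, it holds that `h* ≥ (3/10) log K`. -/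
theorem hstar_ge_log (K : ℕ) (hK : 2 ≤ K) (d H : ℕ → ℝ) (hstar : ℝ)
    (hd : ∀ k, d k = if k = 1 then 0 else (1/4) * ((k : ℝ)/(K : ℝ)))
    (hH : ∀ i ∈ Icc 1 K, H i = ∑ k ∈ (Icc 1 K).erase i, ((d i + d k)^2)⁻¹)
    (hhstar : hstar = ∑ i ∈ Icc 2 K, 1 / ((d i)^2 * H i)) :
    (3/10) * Real.log K ≤ hstar := by
  have key : ∀ i ∈ Icc 2 K, ((i:ℝ)+1)⁻¹ ≤ 1 / ((d i)^2 * H i) := by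
    intro i hi
    rw [mem_Icc] at hi
    obtain ⟨hi2, hiK⟩ := hi
    have hKpos : (0:ℝ) < (K:ℝ) := by exact_mod_cast (by omega : 0 < K)
    have hipos : (0:ℝ) < (i:ℝ) := by exact_mod_cast (by omega : 0 < i)
    have hi1 : (1:ℝ) ≤ (i:ℝ) := by exact_mod_cast (by omega : 1 ≤ i)
    have hdi : d i = (1/4) * ((i:ℝ)/(K:ℝ)) := by rw [hd i]; simp [show i ≠ 1 by omega]
    have hdipos : 0 < d i := by rw [hdi]; positivity
    have hHi : H i = ∑ k ∈ (Icc 1 K).erase i, ((d i + d k)^2)⁻¹ :=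
      hH i (by rw [mem_Icc]; omega)
    have hset : (Icc 1 K).erase i = insert 1 ((Icc 2 K).erase i) := by
      ext x
      simp only [mem_erase, mem_Icc, mem_insert]
      omega
    have h1notin : (1:ℕ) ∉ (Icc 2 K).erase i := by simp [mem_erase, mem_Icc]
    rw [hset, Finset.sum_insert h1notin] at hHi
    have hd1 : d 1 = 0 := by rw [hd 1]; simp
    have hdH : (d i)^2 * H i = 1 + ∑ k ∈ (Icc 2 K).erase i, (d i)^2 * ((d i + d k)^2)⁻¹ := by
      rw [hHi, hd1, mul_add, Finset.mul_sum, add_zero]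
      congr 1
      rw [mul_inv_cancel₀ (by positivity)]
    have hterm : ∀ k ∈ Icc 2 K, (d i)^2 * ((d i + d k)^2)⁻¹ = (i:ℝ)^2 * (((i:ℝ)+(k:ℝ))^2)⁻¹ := by
      intro k hk
      rw [mem_Icc] at hk
      have hkpos : (0:ℝ) < (k:ℝ) := by exact_mod_cast (by omega : 0 < k)
      have hdk : d k = (1/4) * ((k:ℝ)/(K:ℝ)) := by rw [hd k]; simp [show k ≠ 1 by omega]
      rw [hdi, hdk]
      have hik : (0:ℝ) < (i:ℝ) + (k:ℝ) := by linarith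
      field_simp
    have hsub : ∑ k ∈ (Icc 2 K).erase i, (d i)^2 * ((d i + d k)^2)⁻¹
        ≤ ∑ k ∈ Icc 2 K, (d i)^2 * ((d i + d k)^2)⁻¹ := by
      apply Finset.sum_le_sum_of_subset_of_nonneg (Finset.erase_subset _ _)
      intro k _ _
      positivity
    obtain ⟨n, rfl⟩ : ∃ n, K = n + 1 := ⟨K - 1, by omega⟩
    have hfull : ∑ k ∈ Icc 2 (n+1), (d i)^2 * ((d i + d k)^2)⁻¹ ≤ (i:ℝ) := by
      rw [Finset.sum_congr rfl hterm, ← Finset.mul_sum]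
      have htel := aux_tele (i:ℝ) hi1 n
      have h2 : ∑ k ∈ Icc 2 (n+1), (((i:ℝ)+(k:ℝ))^2)⁻¹ ≤ ((i:ℝ)+1)⁻¹ := by
        have hp : (0:ℝ) ≤ ((i:ℝ) + (n:ℝ) + 1)⁻¹ := by positivity
        linarith
      calc (i:ℝ)^2 * ∑ k ∈ Icc 2 (n+1), (((i:ℝ)+(k:ℝ))^2)⁻¹
          ≤ (i:ℝ)^2 * ((i:ℝ)+1)⁻¹ := mul_le_mul_of_nonneg_left h2 (by positivity)
        _ ≤ (i:ℝ) := by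
            rw [mul_inv_le_iff₀ (by positivity)]
            nlinarith
    have hupper : (d i)^2 * H i ≤ (i:ℝ) + 1 := by
      rw [hdH]; linarith
    have hlower : (1:ℝ) ≤ (d i)^2 * H i := by
      rw [hdH]
      have hnn : 0 ≤ ∑ k ∈ (Icc 2 (n+1)).erase i, (d i)^2 * ((d i + d k)^2)⁻¹ :=
        Finset.sum_nonneg fun k _ => by positivity
      linarith
    rw [one_div]
    exact inv_anti₀ (by linarith) hupper
  rw [hhstar]
  calc (3/10) * Real.log K ≤ Real.log ((K:ℝ)+2) - Real.log 3 := aux_num K hK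
    _ ≤ ∑ i ∈ Icc 2 K, ((i:ℝ)+1)⁻¹ := aux_harm K hK
    _ ≤ ∑ i ∈ Icc 2 K, 1/((d i)^2 * H i) := Finset.sum_le_sum key
end
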